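/- Let n ≥ 3 be an integer, ℓ > 0, r₀ > 0, a ∈ ℝ, r₊ > 0, and define V : (0,∞) → ℝ by V(r) = (r²/ℓ²)(1 + a/r^{n−1} − r₀ⁿ/rⁿ), assumed positive on (r₊, ∞). Then lim_{r→∞} rⁿ·(r/ℓ)·(d/dr)[ r²/(ℓ²V(r)) + ℓ²V(r)/r² ] = 0; i.e., the term ∇̌₁tr_ğ(g) = (r/ℓ)∂_r(r²/(ℓ²V) + ℓ²V/r² + n − 2) is o(r^{−n}) as r → ∞. -/

import Mathlib

/-!
Writing `V = (r²/ℓ²) f` with `f(r) = 1 + a r^{1-n} - r₀ⁿ r^{-n}`, the bracket is `f⁻¹ + f`, whose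
derivative `f' (f - 1) (f + 1) / f²` vanishes to second order where `f = 1`. Since `f - 1 = O(r^{1-n})`
and `f' = O(r^{-n})`, the weighted derivative `r^{n+1} f' (f - 1)` is `O(r^{2-n})`, which tends to `0`
for `n ≥ 3`.
-/

open Filter Topology

theorem tendsto_mul_deriv_inv_add_self {l : Filter ℝ} {g g' w : ℝ → ℝ}
    (hg : Tendsto g l (𝓝 1)) (hg' : ∀ᶠ x in l, HasDerivAt g (g' x) x)
    (hw : Tendsto (fun x => w x * g' x * (g x - 1)) l (𝓝 0)) :
    Tendsto (fun x => w x * deriv (fun s => (g s)⁻¹ + g s) x) l (𝓝 0) := by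
  have hfactor : Tendsto (fun x => (g x + 1) / g x ^ 2) l (𝓝 2) := by
    simpa [Pi.div_def, one_add_one_eq_two] using (hg.add_const 1).div (hg.pow 2) (by norm_num)
  have hlim : Tendsto (fun x => w x * g' x * (g x - 1) * ((g x + 1) / g x ^ 2)) l (𝓝 0) := by
    simpa using hw.mul hfactor
  refine hlim.congr' ?_
  filter_upwards [hg', hg.eventually_ne one_ne_zero] with x hx hx0
  rw [HasDerivAt.deriv (f := fun s => (g s)⁻¹ + g s) ((hx.inv hx0).add hx)]
  field_simp
  ring

theorem sq_div_mul_add_mul_div_sq {ℓ r : ℝ} (hℓ : ℓ ≠ 0) (hr : r ≠ 0) (c : ℝ) :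
    r ^ 2 / (ℓ ^ 2 * (r ^ 2 / ℓ ^ 2 * c)) + ℓ ^ 2 * (r ^ 2 / ℓ ^ 2 * c) / r ^ 2 = c⁻¹ + c := by
  have : ℓ ^ 2 * (r ^ 2 / ℓ ^ 2 * c) = r ^ 2 * c := by field_simp
  rw [this, div_mul_cancel_left₀ (by positivity), mul_div_cancel_left₀ _ (by positivity)]

theorem tendsto_comp_inv_atTop {P : ℝ → ℝ} (hP : Continuous P) :
    Tendsto (fun r => P r⁻¹) atTop (𝓝 (P 0)) :=
  (hP.tendsto 0).comp tendsto_inv_atTop_zero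

/-- The factor `f` above with `n = k + 3` and `b = r₀ⁿ`, so that no natural subtraction occurs. -/
noncomputable def blackening (a b : ℝ) (k : ℕ) (r : ℝ) : ℝ :=
  1 + a * r⁻¹ ^ (k + 2) - b * r⁻¹ ^ (k + 3)

section blackening

variable (a b : ℝ) (k : ℕ)

theorem hasDerivAt_blackening {r : ℝ} (hr : r ≠ 0) :
    HasDerivAt (blackening a b k)
      (-(k + 2) * a * r⁻¹ ^ (k + 3) + (k + 3) * b * r⁻¹ ^ (k + 4)) r := by
  have hinv := hasDerivAt_inv hr
  refine (((hinv.fun_pow (k + 2)).const_mul a |>.const_add 1).fun_sub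
    ((hinv.fun_pow (k + 3)).const_mul b)).congr_deriv ?_
  push_cast [Nat.add_sub_cancel, ← inv_pow]
  ring

theorem tendsto_blackening_atTop : Tendsto (blackening a b k) atTop (𝓝 1) := by
  convert tendsto_comp_inv_atTop (P := fun x => 1 + a * x ^ (k + 2) - b * x ^ (k + 3))
    (by fun_prop) using 2 <;> simp [blackening]

theorem tendsto_pow_mul_deriv_blackening_mul_sub_one :
    Tendsto (fun r : ℝ => r ^ (k + 3) * r *
        (-(k + 2) * a * r⁻¹ ^ (k + 3) + (k + 3) * b * r⁻¹ ^ (k + 4)) *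
        (blackening a b k r - 1)) atTop (𝓝 0) := by
  -- in terms of `x = r⁻¹` the product is a polynomial with a factor `x ^ (k + 1)`
  have hlim : Tendsto (fun r : ℝ => (-(k + 2) * a + (k + 3) * b * r⁻¹) * (a - b * r⁻¹) *
      r⁻¹ ^ (k + 1)) atTop (𝓝 0) := by
    simpa using tendsto_comp_inv_atTop
      (P := fun x => (-(k + 2) * a + (k + 3) * b * x) * (a - b * x) * x ^ (k + 1)) (by fun_prop)
  refine hlim.congr' ?_
  filter_upwards [eventually_gt_atTop 0] with r hr
  simp only [blackening, inv_pow]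
  field_simp
  ring

end blackening

theorem stmt_14_general (n : ℕ) (hn : 3 ≤ n) (ℓ r₀ : ℝ) (hℓ : 0 < ℓ) (a : ℝ)
    (V : ℝ → ℝ)
    (hV : ∀ r > (0 : ℝ), V r = r ^ 2 / ℓ ^ 2 * (1 + a / r ^ (n - 1) - r₀ ^ n / r ^ n)) :
    Tendsto (fun r => r ^ n * (r / ℓ) *
        deriv (fun s => s ^ 2 / (ℓ ^ 2 * V s) + ℓ ^ 2 * V s / s ^ 2) r) atTop
      (nhds 0) := by
  obtain ⟨k, rfl⟩ : ∃ k, n = k + 3 := ⟨n - 3, by omega⟩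
  set f := blackening a (r₀ ^ (k + 3)) k
  have hVf : ∀ s > 0, V s = s ^ 2 / ℓ ^ 2 * f s := by
    intro s hs
    simp [hV s hs, f, blackening, div_eq_mul_inv, inv_pow]
  have hderiv : ∀ᶠ r in atTop, deriv (fun s => s ^ 2 / (ℓ ^ 2 * V s) + ℓ ^ 2 * V s / s ^ 2) r
      = deriv (fun s => (f s)⁻¹ + f s) r := by
    filter_upwards [eventually_gt_atTop 0] with r hr
    refine EventuallyEq.deriv_eq ?_
    filter_upwards [Ioi_mem_nhds hr] with s hs
    rw [hVf s hs, sq_div_mul_add_mul_div_sq hℓ.ne' hs.ne']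
  have hlim := (tendsto_mul_deriv_inv_add_self (tendsto_blackening_atTop a (r₀ ^ (k + 3)) k)
    ((eventually_gt_atTop 0).mono fun r hr => hasDerivAt_blackening a (r₀ ^ (k + 3)) k hr.ne')
    (tendsto_pow_mul_deriv_blackening_mul_sub_one a (r₀ ^ (k + 3)) k)).const_mul ℓ⁻¹
  rw [mul_zero] at hlim
  refine hlim.congr' ?_
  filter_upwards [hderiv] with r hr
  rw [hr]
  ring

/-- the trace term ∇̌₁tr_ğ(g) = (r/ℓ)∂_r(r²/(ℓ²V) + ℓ²V/r² + n − 2)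
is o(r^{−n}) as r → ∞, i.e. rⁿ·(r/ℓ)·(d/dr)[r²/(ℓ²V) + ℓ²V/r²] → 0. -/
theorem stmt_14 (n : ℕ) (hn : 3 ≤ n) (ℓ r₀ : ℝ) (hℓ : 0 < ℓ) (hr₀ : 0 < r₀) (a : ℝ)
    (rp : ℝ) (hrp : 0 < rp)
    (V : ℝ → ℝ)
    (hV : ∀ r > (0 : ℝ), V r = r ^ 2 / ℓ ^ 2 * (1 + a / r ^ (n - 1) - r₀ ^ n / r ^ n))
    (hVpos : ∀ r > rp, 0 < V r) :
    Tendsto (fun r => r ^ n * (r / ℓ) *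
        deriv (fun s => s ^ 2 / (ℓ ^ 2 * V s) + ℓ ^ 2 * V s / s ^ 2) r) atTop
      (nhds 0) :=
  stmt_14_general n hn ℓ r₀ hℓ a V hV
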